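/- The piecewise function f^∞(x) = (m₁/√(2πσ²))·exp(-(x - x₀)²/(2σ²)) for |x - x₀| ≥ δ and f^∞(x) = m₂/(2δ) for |x - x₀| < δ, with (m₁, m₂) solving the continuity-and-mass system, satisfies the stationary equation (x - x₀)f^∞(x) + d/dx(κ(x)f^∞(x)) = 0 for all x with |x - x₀| ≠ δ, where κ(x) = σ² + δ²/2 - (x - x₀)²/2 for |x - x₀| < δ and κ(x) = σ² otherwise. -/

import Mathlib

/-!
On each side of `|x - x₀| = δ` the flux `κ f` is locally smooth with `(κ f)' = -(x - x₀) f`: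
inside, `f` is constant and `κ' = -(x - x₀)`; outside, `κ = σ²` and the Gaussian satisfies
`f' = -(x - x₀) f / σ²`.
-/

open Real

/-- The nonconstant diffusion function of the surrogate Fokker-Planck equation. -/
noncomputable def kappa (σ δ x₀ : ℝ) (x : ℝ) : ℝ :=
  if |x - x₀| < δ then σ^2 + δ^2/2 - (x - x₀)^2/2 else σ^2

/-- The piecewise Gaussian-uniform steady profile. -/
noncomputable def finf (σ δ x₀ m₁ m₂ : ℝ) (x : ℝ) : ℝ :=
  if |x - x₀| < δ then m₂ / (2 * δ)
  else (m₁ / Real.sqrt (2 * π * σ^2)) * Real.exp (-(x - x₀)^2 / (2 * σ^2))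

open Filter Topology

theorem hasDerivAt_sub_sq (x₀ x : ℝ) : HasDerivAt (fun y => (y - x₀)^2) (2 * (x - x₀)) x := by
  simpa using ((hasDerivAt_id x).sub_const x₀).fun_pow 2

theorem hasDerivAt_exp_neg_sub_sq_div (σ x₀ x : ℝ) (hσ : σ ≠ 0) :
    HasDerivAt (fun y => exp (-(y - x₀)^2 / (2 * σ^2)))
      (-(x - x₀) / σ^2 * exp (-(x - x₀)^2 / (2 * σ^2))) x := by
  have h : HasDerivAt (fun y => -(y - x₀)^2 / (2 * σ^2)) (-(2 * (x - x₀)) / (2 * σ^2)) x :=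
    (hasDerivAt_sub_sq x₀ x).neg.div_const _
  convert h.exp using 1
  field_simp

section

variable {σ δ x₀ m₁ m₂ x : ℝ}

theorem kappa_mul_finf_eventuallyEq_of_lt (hx : |x - x₀| < δ) :
    (fun y => kappa σ δ x₀ y * finf σ δ x₀ m₁ m₂ y)
      =ᶠ[𝓝 x] fun y => (σ^2 + δ^2/2 - (y - x₀)^2/2) * (m₂ / (2 * δ)) := by
  have hnear : ∀ᶠ y in 𝓝 x, |y - x₀| < δ :=
    (continuous_id.sub continuous_const).abs.continuousAt.eventually_lt continuousAt_const hx
  filter_upwards [hnear] with y hy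
  simp only [kappa, finf, if_pos hy]

theorem kappa_mul_finf_eventuallyEq_of_gt (hx : δ < |x - x₀|) :
    (fun y => kappa σ δ x₀ y * finf σ δ x₀ m₁ m₂ y)
      =ᶠ[𝓝 x] fun y => σ^2 * (m₁ / sqrt (2 * π * σ^2) * exp (-(y - x₀)^2 / (2 * σ^2))) := by
  have hnear : ∀ᶠ y in 𝓝 x, δ < |y - x₀| :=
    continuousAt_const.eventually_lt (continuous_id.sub continuous_const).abs.continuousAt hx
  filter_upwards [hnear] with y hy
  simp only [kappa, finf, if_neg hy.not_gt]

theorem hasDerivAt_kappa_mul_finf (hσ : σ ≠ 0) (hx : |x - x₀| ≠ δ) :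
    HasDerivAt (fun y => kappa σ δ x₀ y * finf σ δ x₀ m₁ m₂ y)
      (-(x - x₀) * finf σ δ x₀ m₁ m₂ x) x := by
  rcases hx.lt_or_gt with hlt | hgt
  · refine HasDerivAt.congr_of_eventuallyEq ?_ (kappa_mul_finf_eventuallyEq_of_lt hlt)
    refine ((((hasDerivAt_sub_sq x₀ x).div_const 2).const_sub (σ^2 + δ^2/2)).mul_const
      (m₂ / (2 * δ))).congr_deriv ?_
    simp only [finf, if_pos hlt]
    ring
  · refine HasDerivAt.congr_of_eventuallyEq ?_ (kappa_mul_finf_eventuallyEq_of_gt hgt)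
    refine (((hasDerivAt_exp_neg_sub_sq_div σ x₀ x hσ).const_mul
      (m₁ / sqrt (2 * π * σ^2))).const_mul (σ^2)).congr_deriv ?_
    simp only [finf, if_neg hgt.not_gt]
    field_simp

end

theorem stmt12_general (σ δ x₀ m₁ m₂ : ℝ) (hσ : 0 < σ) :
    ∀ x : ℝ, |x - x₀| ≠ δ →
      (x - x₀) * finf σ δ x₀ m₁ m₂ x
        + deriv (fun y => kappa σ δ x₀ y * finf σ δ x₀ m₁ m₂ y) x = 0 := by
  intro x hx
  rw [(hasDerivAt_kappa_mul_finf hσ.ne' hx).deriv]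
  ring

theorem stmt12 (σ δ x₀ m₁ m₂ : ℝ) (hσ : 0 < σ) (hδ : 0 < δ)
    (hm₁ : 0 < m₁) (hm₂ : 0 < m₂)
    (hcont : (m₁ / Real.sqrt (2 * π * σ^2)) * Real.exp (-δ^2 / (2 * σ^2)) = m₂ / (2 * δ)) :
    ∀ x : ℝ, |x - x₀| ≠ δ →
      (x - x₀) * finf σ δ x₀ m₁ m₂ x
        + deriv (fun y => kappa σ δ x₀ y * finf σ δ x₀ m₁ m₂ y) x = 0 :=
  stmt12_general σ δ x₀ m₁ m₂ hσ
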